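/- In an effect algebra E, if for every pair of sharp elements x, y with x ⊥ y the join x ∨ y exists, x' ∧ (x ∨ y) = y, and x ⊕ y = x ∨ y, then the set of sharp elements S_E is closed under ⊕ (x, y ∈ S_E and x ⊥ y imply x ⊕ y ∈ S_E). -/
import Mathlib


/-- An effect algebra: a set with a partially defined binary operation `oplus`
(modeled by `Option`), elements `zero` and `one`, satisfying commutativity,
associativity, unique orthosupplementation (`compl`) and the zero-unit law. -/
structure EffectAlgebra (E : Type*) where
  oplus : E → E → Option E
  zero : E
  one : E
  comm : ∀ p q, oplus p q = oplus q p
  assoc : ∀ p q r s t, oplus q r = some s → oplus p s = some t →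
    ∃ u, oplus p q = some u ∧ oplus u r = some t
  compl : E → E
  compl_def : ∀ p, oplus p (compl p) = some one
  compl_unique : ∀ p q, oplus p q = some one → q = compl p
  zero_unit : ∀ p, (oplus one p).isSome → p = zero

namespace EffectAlgebra

variable {E : Type*} (A : EffectAlgebra E)

/-- `p ≤ q` iff there is `r` with `p ⊕ r = q`. -/
def le (p q : E) : Prop := ∃ r, A.oplus p r = some q

/-- `p ⊥ q` iff `p ⊕ q` is defined. -/
def Orth (p q : E) : Prop := (A.oplus p q).isSome

/-- `j` is the join (least upper bound) of `p` and `q`. -/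
def IsJoin (p q j : E) : Prop :=
  A.le p j ∧ A.le q j ∧ ∀ u, A.le p u → A.le q u → A.le j u

/-- `m` is the meet (greatest lower bound) of `p` and `q`. -/
def IsMeet (p q m : E) : Prop :=
  A.le m p ∧ A.le m q ∧ ∀ t, A.le t p → A.le t q → A.le t m

/-- `x` is sharp iff `x ∧ x' = 0`. -/
def Sharp (x : E) : Prop := A.IsMeet x (A.compl x) A.zero

/-- `x` is principal iff `p ⊥ q`, `p ≤ x`, `q ≤ x` imply `p ⊕ q ≤ x`. -/
def Principal (x : E) : Prop :=
  ∀ p q r, A.oplus p q = some r → A.le p x → A.le q x → A.le r x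

end EffectAlgebra

namespace EffectAlgebra

variable {E : Type*} (A : EffectAlgebra E)

lemma compl_one' : A.compl A.one = A.zero := by
  apply A.zero_unit
  rw [A.compl_def]; rfl

lemma compl_compl' (p : E) : A.compl (A.compl p) = p := by
  have := A.compl_unique (A.compl p) p (by rw [A.comm]; exact A.compl_def p)
  exact this.symm

lemma zero_oplus' (p : E) : A.oplus A.zero p = some p := by
  have h1 : A.oplus A.zero A.one = some A.one := by
    rw [A.comm, ← A.compl_one']; exact A.compl_def A.one
  obtain ⟨u, hu1, hu2⟩ := A.assoc A.zero p (A.compl p) A.one A.one (A.compl_def p) h1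
  have h2 : A.compl p = A.compl u := A.compl_unique u (A.compl p) hu2
  have h3 : u = p := by
    have := congrArg A.compl h2
    rw [A.compl_compl', A.compl_compl'] at this; exact this.symm
  rw [h3] at hu1; exact hu1

lemma le_trans' {a b c : E} (h1 : A.le a b) (h2 : A.le b c) : A.le a c := by
  obtain ⟨u, hu⟩ := h1
  obtain ⟨v, hv⟩ := h2
  have h3 : A.oplus u a = some b := by rw [A.comm]; exact hu
  have h4 : A.oplus v b = some c := by rw [A.comm]; exact hv
  obtain ⟨w, hw1, hw2⟩ := A.assoc v u a b c h3 h4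
  exact ⟨w, by rw [A.comm]; exact hw2⟩

end EffectAlgebra

/-- If for all sharp `x ⊥ y` the join `x ∨ y` exists, `x' ∧ (x ∨ y) = y`, and
`x ⊕ y = x ∨ y`, then the sharp elements are closed under `⊕`. -/
theorem stmt_10 {E : Type*} (A : EffectAlgebra E)
    (h : ∀ x y s, A.Sharp x → A.Sharp y → A.oplus x y = some s →
      A.IsJoin x y s ∧ A.IsMeet (A.compl x) s y) :
    ∀ x y s, A.Sharp x → A.Sharp y → A.oplus x y = some s → A.Sharp s := by
  intro x y s hx hy hxy
  obtain ⟨hjoin, hmeet⟩ := h x y s hx hy hxy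
  have hs1' : A.oplus (A.compl s) s = some A.one := by
    rw [A.comm]; exact A.compl_def s
  -- compl x = s' ⊕ y
  have hyx : A.oplus y x = some s := by rw [A.comm]; exact hxy
  obtain ⟨u, hu1, hu2⟩ := A.assoc (A.compl s) y x s A.one hyx hs1'
  have hux : u = A.compl x := A.compl_unique x u (by rw [A.comm]; exact hu2)
  -- compl y = s' ⊕ x
  obtain ⟨v, hv1, hv2⟩ := A.assoc (A.compl s) x y s A.one hxy hs1'
  have hvy : v = A.compl y := A.compl_unique y v (by rw [A.comm]; exact hv2)
  refine ⟨⟨s, A.zero_oplus' s⟩, ⟨A.compl s, A.zero_oplus' _⟩, ?_⟩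
  intro t hts hts'
  -- t ≤ compl x
  have htx' : A.le t (A.compl x) := A.le_trans' hts' ⟨y, by rw [hux] at hu1; exact hu1⟩
  -- t ≤ y
  have hty : A.le t y := hmeet.2.2 t htx' hts
  -- t ≤ compl y
  have hty' : A.le t (A.compl y) := A.le_trans' hts' ⟨x, by rw [hvy] at hv1; exact hv1⟩
  exact hy.2.2 t hty hty'
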